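/- arXiv:1904.00858 — 4 statements merged into one kernel-verified Lean document; each statement's English description precedes it below -/
import Mathlib

section
/- For every complex number γ with |γ| < 1, the map from ℝ to ℝ given by ψ ↦ ψ + 2 Im log((1−γ)/(1−γe^{iψ})), where log denotes the principal branch, is strictly increasing. -/
/-!
With `w = γ e^{iψ}`, the quotient `(1 - γ) / (1 - w)` stays in the slit plane because numerator
and denominator both have positive real part, so the principal logarithm is differentiable along
the curve, with `d/dψ log((1 - γ)/(1 - w)) = i w / (1 - w)`. Hence the derivative of the map is
`1 + 2 Re(w / (1 - w)) = Re((1 + w) / (1 - w)) = (1 - |w|²) / |1 - w|²`, which is positive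
since `|w| = |γ| < 1`.
-/

open Complex

lemma one_sub_re_pos_of_norm_lt_one {z : ℂ} (hz : ‖z‖ < 1) : 0 < (1 - z).re := by
  rw [sub_re, one_re, sub_pos]
  exact (re_le_norm z).trans_lt hz

lemma one_sub_ne_zero_of_norm_lt_one {z : ℂ} (hz : ‖z‖ < 1) : 1 - z ≠ 0 := fun h => by
  simpa [h] using one_sub_re_pos_of_norm_lt_one hz

lemma div_mem_slitPlane_of_re_pos {a b : ℂ} (ha : 0 < a.re) (hb : 0 < b.re) :
    a / b ∈ slitPlane := by
  rw [mem_slitPlane_iff_not_le_zero, le_def, zero_re, zero_im]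
  rintro ⟨hre, him⟩
  have hb0 : b ≠ 0 := fun h => by simp [h] at hb
  have hre_eq : a.re = (a / b).re * b.re := by
    conv_lhs => rw [← div_mul_cancel₀ a hb0]
    rw [mul_re, him, zero_mul, sub_zero]
  nlinarith

lemma re_one_add_div_one_sub (w : ℂ) :
    ((1 + w) / (1 - w)).re = (1 - normSq w) / normSq (1 - w) := by
  rw [div_re, normSq_apply, normSq_apply]
  simp only [add_re, add_im, sub_re, sub_im, one_re, one_im]
  ring

lemma re_one_add_div_one_sub_pos {w : ℂ} (hw : ‖w‖ < 1) : 0 < ((1 + w) / (1 - w)).re := by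
  rw [re_one_add_div_one_sub]
  refine div_pos ?_ (normSq_pos.mpr (one_sub_ne_zero_of_norm_lt_one hw))
  rw [sub_pos, ← Complex.sq_norm]
  nlinarith [norm_nonneg w]

lemma norm_mul_exp_I_mul_ofReal (γ : ℂ) (ψ : ℝ) : ‖γ * exp (I * ψ)‖ = ‖γ‖ := by
  rw [norm_mul, norm_exp_I_mul_ofReal, mul_one]

lemma hasDerivAt_log_div_one_sub_mul_exp {γ : ℂ} (hγ : ‖γ‖ < 1) (ψ : ℝ) :
    HasDerivAt (fun t : ℝ => log ((1 - γ) / (1 - γ * exp (I * t))))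
      (I * (γ * exp (I * ψ) / (1 - γ * exp (I * ψ)))) ψ := by
  have hw : ‖γ * exp (I * ψ)‖ < 1 := (norm_mul_exp_I_mul_ofReal γ ψ).trans_lt hγ
  have hγ0 := one_sub_ne_zero_of_norm_lt_one hγ
  have hw0 := one_sub_ne_zero_of_norm_lt_one hw
  have hexp : HasDerivAt (fun t : ℝ => exp (I * t)) (exp (I * ψ) * I) ψ := by
    simpa using (ofRealCLM.hasDerivAt.const_mul I).cexp
  have hquot := (hasDerivAt_const ψ (1 - γ)).fun_div ((hexp.const_mul γ).const_sub 1) hw0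
  have hslit := div_mem_slitPlane_of_re_pos (one_sub_re_pos_of_norm_lt_one hγ)
    (one_sub_re_pos_of_norm_lt_one hw)
  exact (hquot.clog_real hslit).congr_deriv (by field_simp; ring)

lemma hasDerivAt_im_log_div_one_sub_mul_exp {γ : ℂ} (hγ : ‖γ‖ < 1) (ψ : ℝ) :
    HasDerivAt (fun t : ℝ => (log ((1 - γ) / (1 - γ * exp (I * t)))).im)
      (γ * exp (I * ψ) / (1 - γ * exp (I * ψ))).re ψ :=
  (imCLM.hasFDerivAt.comp_hasDerivAt ψ (hasDerivAt_log_div_one_sub_mul_exp hγ ψ)).congr_deriv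
    (I_mul_im _)

/-- for every complex `γ` with `|γ| < 1`, the map
`ψ ↦ ψ + 2 Im log((1 − γ)/(1 − γ e^{iψ}))` (principal branch) is strictly increasing on `ℝ`. -/
theorem prufer_step_strictMono (γ : ℂ) (hγ : ‖γ‖ < 1) :
    StrictMono (fun ψ : ℝ =>
      ψ + 2 * (Complex.log ((1 - γ) / (1 - γ * Complex.exp (Complex.I * (ψ : ℂ))))).im) := by
  refine strictMono_of_deriv_pos fun ψ => ?_
  set w := γ * exp (I * ψ)
  have hw : ‖w‖ < 1 := (norm_mul_exp_I_mul_ofReal γ ψ).trans_lt hγ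
  rw [((hasDerivAt_id' ψ).fun_add
    ((hasDerivAt_im_log_div_one_sub_mul_exp hγ ψ).const_mul 2)).deriv]
  have hcayley : (1 + w) / (1 - w) = 1 + 2 * (w / (1 - w)) := by
    field_simp [one_sub_ne_zero_of_norm_lt_one hw]
    ring
  simpa [hcayley] using re_one_add_div_one_sub_pos hw
end

section
/- Fix β > 0, n ≥ 1, θ ∈ ℝ and a ∈ ℝ. With respect to the filtration (F_k)_{0≤k≤n−1} where F_k is generated by γ_0^{(n)},…,γ_{k−1}^{(n)}, the process (ψ_k^{(n)}(θ,a) − kθ)_{0≤k≤n−1} is a martingale. -/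
open MeasureTheory ProbabilityTheory Real Complex
open scoped ENNReal

/-- The Prüfer phases: `pruferPhase γ θ a k = ψ_k(θ, a)`, defined by `ψ_0(θ,a) = θ + a` and
`ψ_{k+1}(θ,a) = ψ_k(θ,a) + θ + 2 Im log((1 − γ_k)/(1 − γ_k e^{i ψ_k(θ,a)}))`
(principal branch of the logarithm). -/
noncomputable def pruferPhase (γ : ℕ → ℂ) (θ a : ℝ) : ℕ → ℝ
  | 0 => θ + a
  | k + 1 => pruferPhase γ θ a k + θ +
      2 * (Complex.log ((1 - γ k) /
        (1 - γ k * Complex.exp (Complex.I * ((pruferPhase γ θ a k : ℝ) : ℂ))))).im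

/-- The law on the open unit disc of `ℂ` with density `s (1 − |z|²)^{s−1}` with respect to the
uniform probability measure on the unit disc. -/
noncomputable def gammaLaw (s : ℝ) : Measure ℂ :=
  ((volume (Metric.ball (0 : ℂ) 1))⁻¹ • volume.restrict (Metric.ball (0 : ℂ) 1)).withDensity
    (fun z => ENNReal.ofReal (s * (1 - ‖z‖ ^ 2) ^ (s - 1)))

/-!
The increment `ψ_{k+1} - ψ_k - θ = 2 Im log (1 - γ_k) - 2 Im log (1 - γ_k e^{iψ_k})` is bounded,
`ψ_k` is `F_k`-measurable and `γ_k` is independent of `F_k`. Conditionally on `F_k` one may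
therefore integrate over `γ_k` with `ψ_k` frozen, and the two logarithms then have the same
integral because the law of `γ_k` is invariant under the rotation `z ↦ z e^{iψ_k}` and lives on
the open disc, where `Im log` of a quotient of points of the right half-plane splits.
-/

namespace Complex

lemma re_one_sub_pos {z : ℂ} (hz : ‖z‖ < 1) : 0 < (1 - z).re := by
  have := (abs_le.1 (abs_re_le_norm z)).2
  simp only [sub_re, one_re]
  linarith

lemma im_log_div_of_re_pos {x y : ℂ} (hx : 0 < x.re) (hy : 0 < y.re) :
    (log (x / y)).im = (log x).im - (log y).im := by
  have hx' := abs_lt.1 (abs_arg_lt_pi_div_two_iff.2 (Or.inl hx))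
  have hy' := abs_lt.1 (abs_arg_lt_pi_div_two_iff.2 (Or.inl hy))
  simp only [log_im]
  rw [← arg_coe_angle_toReal_eq_arg, arg_div_coe_angle (ne_zero_of_re_pos hx)
    (ne_zero_of_re_pos hy), ← Real.Angle.coe_sub, Real.Angle.toReal_coe_eq_self_iff_mem_Ioc]
  constructor <;> linarith

end Complex

noncomputable def pruferIncrement (z : ℂ) (ψ : ℝ) : ℝ :=
  2 * (Complex.log ((1 - z) / (1 - z * Complex.exp (Complex.I * ψ)))).im

lemma pruferPhase_succ (γ : ℕ → ℂ) (θ a : ℝ) (k : ℕ) :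
    pruferPhase γ θ a (k + 1) =
      pruferPhase γ θ a k + θ + pruferIncrement (γ k) (pruferPhase γ θ a k) := rfl

lemma abs_pruferIncrement_le (z : ℂ) (ψ : ℝ) : |pruferIncrement z ψ| ≤ 2 * π := by
  rw [pruferIncrement, abs_mul, abs_two, log_im]
  gcongr
  exact abs_arg_le_pi _

@[fun_prop]
lemma Measurable.pruferIncrement {α : Type*} [MeasurableSpace α] {f : α → ℂ} {g : α → ℝ}
    (hf : Measurable f) (hg : Measurable g) :
    Measurable fun x => _root_.pruferIncrement (f x) (g x) := by
  unfold _root_.pruferIncrement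
  fun_prop

lemma integral_pruferIncrement_eq_zero {μ : Measure ℂ} [IsFiniteMeasure μ]
    (hrot : ∀ c : Circle, μ.map (rotation c) = μ) (hball : ∀ᵐ z ∂μ, ‖z‖ < 1) (ψ : ℝ) :
    ∫ z, pruferIncrement z ψ ∂μ = 0 := by
  set c : Circle := Circle.exp ψ
  have hc : (c : ℂ) = Complex.exp (Complex.I * ψ) := by rw [Circle.coe_exp, mul_comm]
  set f : ℂ → ℝ := fun z => (Complex.log (1 - z)).im
  have hf : Integrable f μ := by
    refine Integrable.of_bound (by fun_prop) π (ae_of_all _ fun z => ?_)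
    simpa only [f, Real.norm_eq_abs, log_im] using abs_arg_le_pi _
  have hsplit : (fun z => pruferIncrement z ψ) =ᵐ[μ] fun z => 2 * (f z - f (rotation c z)) := by
    filter_upwards [hball] with z hz
    have hzc : ‖z * c‖ < 1 := by rwa [norm_mul, Circle.norm_coe, mul_one]
    rw [pruferIncrement, rotation_apply, mul_comm (c : ℂ), ← hc,
      Complex.im_log_div_of_re_pos (Complex.re_one_sub_pos hz) (Complex.re_one_sub_pos hzc)]
  have hf' : Integrable f (μ.map (rotation c)) := by rwa [hrot c]
  have hinv : ∫ z, f (rotation c z) ∂μ = ∫ z, f z ∂μ := by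
    rw [← integral_map (by fun_prop) hf'.aestronglyMeasurable, hrot c]
  have hfc : Integrable (fun z => f (rotation c z)) μ := hf'.comp_measurable (by fun_prop)
  rw [integral_congr_ae hsplit, integral_const_mul, integral_sub hf hfc, hinv, sub_self,
    mul_zero]

lemma MeasureTheory.MeasurePreserving.map_withDensity_comp {α β : Type*} [MeasurableSpace α]
    [MeasurableSpace β] {μ : Measure α} {ν : Measure β} {f : α → β}
    (hf : MeasurePreserving f μ ν) {w : β → ℝ≥0∞} (hw : Measurable w) :
    (μ.withDensity (w ∘ f)).map f = ν.withDensity w := by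
  ext A hA
  rw [Measure.map_apply hf.measurable hA, withDensity_apply _ (hA.preimage hf.measurable),
    withDensity_apply _ hA, ← hf.map_eq, setLIntegral_map hA hw hf.measurable]
  rfl

lemma gammaLaw_map_rotation (s : ℝ) (c : Circle) : (gammaLaw s).map (rotation c) = gammaLaw s := by
  have hvol : MeasurePreserving (rotation c) (volume.restrict (Metric.ball (0 : ℂ) 1))
      (volume.restrict (Metric.ball (0 : ℂ) 1)) := by
    have := (rotation c).measurePreserving.restrict_preimage
      (measurableSet_ball (x := (0 : ℂ)) (ε := 1))
    rwa [LinearIsometryEquiv.preimage_ball, map_zero] at this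
  set w : ℂ → ℝ≥0∞ := fun z => ENNReal.ofReal (s * (1 - ‖z‖ ^ 2) ^ (s - 1))
  have hw : w ∘ rotation c = w := funext fun z => by simp [w, Circle.norm_coe]
  have := (hvol.smul_measure (volume (Metric.ball (0 : ℂ) 1))⁻¹).map_withDensity_comp
    (w := w) (by fun_prop)
  rwa [hw] at this

lemma ae_norm_lt_one_gammaLaw (s : ℝ) : ∀ᵐ z ∂gammaLaw s, ‖z‖ < 1 :=
  ((withDensity_absolutelyContinuous _ _).trans Measure.smul_absolutelyContinuous).ae_le <| by
    filter_upwards [ae_restrict_mem measurableSet_ball] with z hz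
    simpa using hz

section Independence

variable {Ω E F G : Type*} {mF m : MeasurableSpace Ω} [MeasurableSpace E] [MeasurableSpace F]
  {P : Measure Ω}

lemma ProbabilityTheory.iIndepFun.indep_iSup_range_comap {N : ℕ} {γ : ℕ → Ω → E}
    (hindep : iIndepFun (fun j : Fin N => γ j.1) P) (hmeas : ∀ j, Measurable (γ j)) {i : ℕ}
    (hi : i < N) :
    Indep (⨆ j ∈ Finset.range i, MeasurableSpace.comap (γ j) inferInstance)
      (MeasurableSpace.comap (γ i) inferInstance) P := by
  have := indep_iSup_of_disjoint (fun j => (hmeas j.1).comap_le)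
    ((iIndepFun_iff_iIndep _ _ _).1 hindep) (S := {j : Fin N | j.1 < i}) (T := {⟨i, hi⟩})
    (by simp)
  have hS : ⨆ j ∈ {j : Fin N | j.1 < i}, MeasurableSpace.comap (γ j.1) inferInstance =
      ⨆ j ∈ Finset.range i, MeasurableSpace.comap (γ j) inferInstance := by
    refine le_antisymm (iSup₂_le fun j hj => ?_) (iSup₂_le fun j hj => ?_)
    · exact le_iSup₂_of_le (f := fun (j : ℕ) (_ : j ∈ Finset.range i) =>
        MeasurableSpace.comap (γ j) inferInstance) j.1 (Finset.mem_range.2 hj) le_rfl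
    · exact le_iSup₂_of_le (f := fun (j : Fin N) (_ : j ∈ {j : Fin N | j.1 < i}) =>
        MeasurableSpace.comap (γ j.1) inferInstance) ⟨j, (Finset.mem_range.1 hj).trans hi⟩
        (Finset.mem_range.1 hj) le_rfl
  have hT : ⨆ j ∈ ({⟨i, hi⟩} : Set (Fin N)), MeasurableSpace.comap (γ j.1) inferInstance =
      MeasurableSpace.comap (γ i) inferInstance := by
    simp
  rwa [hS, hT] at this

variable [IsFiniteMeasure P] [NormedAddCommGroup G] [NormedSpace ℝ G] {V : Ω → E} {Y : Ω → F}

lemma ProbabilityTheory.IndepFun.integral_comp_prodMk (hVY : IndepFun V Y P)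
    (hV : AEMeasurable V P) (hY : AEMeasurable Y P) {g : E × F → G} (hg : StronglyMeasurable g)
    (hint : Integrable (fun ω => g (V ω, Y ω)) P) :
    ∫ ω, g (V ω, Y ω) ∂P = ∫ v, ∫ y, g (v, y) ∂P.map Y ∂P.map V := by
  have hmap := (indepFun_iff_map_prod_eq_prod_map_map hV hY).1 hVY
  have hint' := (integrable_map_measure hg.aestronglyMeasurable (hV.prodMk hY)).2 hint
  rw [hmap] at hint'
  rw [← integral_prod _ hint', ← hmap, integral_map (hV.prodMk hY) hg.aestronglyMeasurable]

lemma condExp_comp_prodMk_ae_eq_zero_of_indep (hmF : mF ≤ m)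
    (hind : Indep mF (MeasurableSpace.comap Y inferInstance) P) (hV : Measurable[mF] V)
    (hY : Measurable Y) {g : E × F → ℝ} (hg : Measurable g)
    (hint : Integrable (fun ω => g (V ω, Y ω)) P)
    (h0 : ∀ v, ∫ y, g (v, y) ∂P.map Y = 0) :
    P[fun ω => g (V ω, Y ω) | mF] =ᵐ[P] 0 := by
  refine (ae_eq_condExp_of_forall_setIntegral_eq hmF hint (fun _ _ _ => integrableOn_zero)
    (fun s hs _ => ?_) aestronglyMeasurable_zero).symm
  -- Record `s` in an extra coordinate, so that the set integral becomes a full integral.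
  set W : Ω → E × ℝ := fun ω => (V ω, s.indicator 1 ω)
  have hs1 : Measurable[mF] (s.indicator (1 : Ω → ℝ)) :=
    (@measurable_one ℝ Ω _ mF _).indicator hs
  have hW : Measurable[mF] W := hV.prodMk hs1
  have hWY : IndepFun W Y P := indep_of_indep_of_le_left hind hW.comap_le
  have hWm : Measurable W := hW.mono hmF le_rfl
  have hsW : ∀ ω, s.indicator (fun ω => g (V ω, Y ω)) ω = (W ω).2 * g ((W ω).1, Y ω) := by
    intro ω
    by_cases hω : ω ∈ s <;> simp [W, hω]
  have hint' : Integrable (fun ω => (W ω).2 * g ((W ω).1, Y ω)) P := by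
    simpa only [← hsW] using hint.indicator (hmF s hs)
  rw [integral_zero, ← integral_indicator (hmF s hs), funext hsW,
    hWY.integral_comp_prodMk hWm.aemeasurable hY.aemeasurable
      (g := fun p : (E × ℝ) × F => p.1.2 * g (p.1.1, p.2)) (by fun_prop) hint']
  simp [integral_const_mul, h0]

end Independence

lemma measurable_pruferPhase {Ω : Type*} {m : MeasurableSpace Ω} {γ : ℕ → Ω → ℂ} (θ a : ℝ)
    {k : ℕ} (hγ : ∀ j < k, Measurable (γ j)) :
    Measurable fun ω => pruferPhase (fun j => γ j ω) θ a k := by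
  induction k with
  | zero => exact measurable_const
  | succ k ih =>
    have hψ := ih fun j hj => hγ j (hj.trans k.lt_succ_self)
    simp only [pruferPhase_succ]
    exact (hψ.add_const θ).add ((hγ k k.lt_succ_self).pruferIncrement hψ)

lemma abs_pruferPhase_sub_le (γ : ℕ → ℂ) (θ a : ℝ) (k : ℕ) :
    |pruferPhase γ θ a k - k * θ| ≤ |θ + a| + 2 * π * k := by
  induction k with
  | zero => simp [pruferPhase]
  | succ k ih =>
    have hstep : pruferPhase γ θ a (k + 1) - (k + 1 : ℕ) * θ =
        (pruferPhase γ θ a k - k * θ) + pruferIncrement (γ k) (pruferPhase γ θ a k) := by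
      rw [pruferPhase_succ]
      push_cast
      ring
    calc |pruferPhase γ θ a (k + 1) - (k + 1 : ℕ) * θ|
        ≤ |pruferPhase γ θ a k - k * θ| + |pruferIncrement (γ k) (pruferPhase γ θ a k)| := by
          rw [hstep]
          exact abs_add_le _ _
      _ ≤ |θ + a| + 2 * π * k + 2 * π := add_le_add ih (abs_pruferIncrement_le _ _)
      _ = |θ + a| + 2 * π * (k + 1 : ℕ) := by push_cast; ring

theorem martingale_pruferPhase_sub {Ω : Type*} {m : MeasurableSpace Ω} {P : Measure Ω}
    [IsFiniteMeasure P] {γ : ℕ → Ω → ℂ} {N : ℕ} (F : Filtration ℕ m) (θ a : ℝ)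
    (hγF : ∀ k, ∀ j < min k N, Measurable[F k] (γ j))
    (hindep : ∀ i < N, Indep (F i) (MeasurableSpace.comap (γ i) inferInstance) P)
    (hrot : ∀ i < N, ∀ c : Circle, (P.map (γ i)).map (rotation c) = P.map (γ i))
    (hball : ∀ i < N, ∀ᵐ z ∂P.map (γ i), ‖z‖ < 1) :
    Martingale (fun k ω => pruferPhase (fun j => γ j ω) θ a (min k N) - (min k N : ℕ) * θ)
      F P := by
  set ψ : ℕ → Ω → ℝ := fun k ω => pruferPhase (fun j => γ j ω) θ a k
  have hψ : ∀ k, Measurable[F k] (ψ (min k N)) := fun k => measurable_pruferPhase θ a (hγF k)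
  refine martingale_of_condExp_sub_eq_zero_nat (fun k => ((hψ k).sub_const _).stronglyMeasurable)
    (fun k => Integrable.of_bound (((hψ k).mono (F.le k) le_rfl).sub_const _).aestronglyMeasurable
      _ (ae_of_all _ fun ω => abs_pruferPhase_sub_le _ θ a _)) fun i => ?_
  rcases lt_or_ge i N with hi | hi
  · have hγi : Measurable (γ i) :=
      (hγF (i + 1) i (by omega)).mono (F.le _) le_rfl
    have hincr : (fun ω => ψ (min (i + 1) N) ω - (min (i + 1) N : ℕ) * θ) -
        (fun ω => ψ (min i N) ω - (min i N : ℕ) * θ) =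
        fun ω => pruferIncrement (γ i ω) (ψ i ω) := by
      funext ω
      simp only [ψ, Pi.sub_apply, min_eq_left hi.le, min_eq_left (Nat.succ_le_of_lt hi),
        pruferPhase_succ]
      push_cast
      ring
    have hψi : Measurable[F i] (ψ i) := by simpa only [min_eq_left hi.le] using hψ i
    have hg : Measurable fun p : ℝ × ℂ => pruferIncrement p.2 p.1 :=
      measurable_snd.pruferIncrement measurable_fst
    have hint : Integrable (fun ω => pruferIncrement (γ i ω) (ψ i ω)) P :=
      Integrable.of_bound (hγi.pruferIncrement (hψi.mono (F.le i) le_rfl)).aestronglyMeasurable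
        _ (ae_of_all _ fun ω => abs_pruferIncrement_le _ _)
    rw [hincr]
    exact condExp_comp_prodMk_ae_eq_zero_of_indep (F.le i) (hindep i hi) hψi hγi hg hint
      (integral_pruferIncrement_eq_zero (hrot i hi) (hball i hi))
  · have hfrozen : (fun ω => ψ (min (i + 1) N) ω - (min (i + 1) N : ℕ) * θ) -
        (fun ω => ψ (min i N) ω - (min i N : ℕ) * θ) = 0 := by
      rw [min_eq_right hi, min_eq_right (hi.trans i.le_succ), sub_self]
    rw [hfrozen, condExp_zero]

/-- with respect to the filtration `(F_k)_{0 ≤ k ≤ n−1}` where `F_k` is generated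
by `γ_0^{(n)}, …, γ_{k−1}^{(n)}`, the process `(ψ_k^{(n)}(θ, a) − kθ)_{0 ≤ k ≤ n−1}` is a
martingale.  (The filtration and the process are frozen at time `n − 1`, so that the statement
is expressed with `ℕ`-indexed objects: the asserted martingale property for the truncated
objects is exactly the martingale property of `(ψ_k^{(n)}(θ,a) − kθ)_{0 ≤ k ≤ n−1}`.) -/
theorem prufer_phase_martingale (β : ℝ) (n : ℕ) (hn : 1 ≤ n)
    (Ω : Type) (m : MeasurableSpace Ω) (P : Measure Ω) (_ : IsProbabilityMeasure P)
    (γ : ℕ → Ω → ℂ) (hmeas : ∀ j, Measurable (γ j))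
    (hlaw : ∀ j : ℕ, j < n - 1 →
      Measure.map (γ j) P = gammaLaw ((β / 2) * ((n : ℝ) - 1 - j)))
    (hindep : iIndepFun (fun j : Fin (n - 1) => γ j.1) P)
    (θ a : ℝ)
    (F : MeasureTheory.Filtration ℕ m)
    (hF : ∀ k : ℕ, F k =
      ⨆ j ∈ Finset.range (min k (n - 1)), MeasurableSpace.comap (γ j) inferInstance) :
    MeasureTheory.Martingale
      (fun k ω => pruferPhase (fun j => γ j ω) θ a (min k (n - 1))
        - (min k (n - 1) : ℝ) * θ) F P := by
  -- `(min k (n - 1) : ℝ)` elaborates to `min (k : ℝ) ((n : ℝ) - 1)`.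
  have hcast : (n : ℝ) - 1 = ((n - 1 : ℕ) : ℝ) := by rw [Nat.cast_sub hn, Nat.cast_one]
  simp only [hcast, ← Nat.cast_min]
  refine martingale_pruferPhase_sub F θ a (fun k j hj => ?_) (fun i hi => ?_)
    (fun i hi c => by rw [hlaw i hi]; exact gammaLaw_map_rotation _ c)
    (fun i hi => by rw [hlaw i hi]; exact ae_norm_lt_one_gammaLaw _)
  · rw [hF k]
    exact (comap_measurable (γ j)).mono (le_iSup₂ (f := fun j (_ : j ∈ Finset.range _) =>
      MeasurableSpace.comap (γ j) inferInstance) j (Finset.mem_range.2 hj)) le_rfl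
  · rw [hF i, min_eq_left hi.le]
    exact hindep.indep_iSup_range_comap hmeas hi
end

section
/- There exists a universal constant C > 0 such that for every m > 0, if X is a random variable with density m·(1−x)^{m−1} on [0,1] (a Beta(1, m) variable), then E[(log(1 − √X))²] ≤ C·(1/m + 1/m²). -/
open MeasureTheory Real
open scoped ENNReal

/-! Since `1 - x = (1 - √x)(1 + √x)` and `0 ≤ log (1 + √x) ≤ √x`, one has
`log (1 - √x)² ≤ 2 log (1 - x)² - 2 log (1 - x)`. The elementary bound `-log t ≤ t^{-a} / a`
turns the right side into `(32/m² + 4/m) (1 - x)^{-m/2}`, and for a `Beta(1, m)` variable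
`E[(1 - X)^{-a}] = m / (m - a)`, which is `2` at `a = m/2`. -/

/-- The law of a `Beta(1, m)` random variable: the probability measure on `[0,1]` with density
`m (1 − x)^{m−1}` with respect to the Lebesgue measure. -/
noncomputable def betaOneLaw (m : ℝ) : Measure ℝ :=
  (volume.restrict (Set.Icc (0 : ℝ) 1)).withDensity
    (fun x => ENNReal.ofReal (m * (1 - x) ^ (m - 1)))

theorem neg_log_le_rpow_neg_div {t a : ℝ} (ht : 0 ≤ t) (ha : 0 < a) :
    -log t ≤ t ^ (-a) / a := by
  simpa [Real.log_inv, Real.inv_rpow ht, Real.rpow_neg ht] using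
    Real.log_le_rpow_div (inv_nonneg.2 ht) ha

theorem sq_log_le_four_mul_rpow_neg_div_sq {t a : ℝ} (ht0 : 0 ≤ t) (ht1 : t ≤ 1)
    (ha : 0 < a) :
    log t ^ 2 ≤ 4 * t ^ (-a) / a ^ 2 := by
  have hlog : 0 ≤ -log t := neg_nonneg.2 (Real.log_nonpos ht0 ht1)
  calc log t ^ 2 = (-log t) ^ 2 := by ring
    _ ≤ (t ^ (-(a / 2)) / (a / 2)) ^ 2 :=
      pow_le_pow_left₀ hlog (neg_log_le_rpow_neg_div ht0 (half_pos ha)) 2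
    _ = 4 * t ^ (-a) / a ^ 2 := by
      rw [div_pow, ← Real.rpow_natCast, ← Real.rpow_mul ht0]; ring_nf

theorem sq_log_one_sub_sqrt_le {x : ℝ} (hx0 : 0 ≤ x) (hx1 : x ≤ 1) :
    log (1 - √x) ^ 2 ≤ 2 * log (1 - x) ^ 2 - 2 * log (1 - x) := by
  rcases hx1.eq_or_lt with rfl | hx1
  · simp
  set u := √x
  have hu0 : 0 ≤ u := Real.sqrt_nonneg x
  have hu1 : u < 1 := (Real.sqrt_lt' one_pos).2 (by simpa using hx1)
  have hsplit : log (1 - x) = log (1 - u) + log (1 + u) := by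
    rw [← Real.log_mul (by linarith) (by linarith)]
    congr 1
    nlinarith [Real.sq_sqrt hx0]
  have hlog1 : log (1 + u) ≤ u := by
    linarith [Real.log_le_sub_one_of_pos (by linarith : 0 < 1 + u)]
  have hlog2 : 0 ≤ log (1 + u) := Real.log_nonneg (by linarith)
  have hx : x ≤ -log (1 - x) := by linarith [Real.log_le_sub_one_of_pos (by linarith : 0 < 1 - x)]
  nlinarith [sq_nonneg (log (1 - x) + log (1 + u)), Real.sq_sqrt hx0]

theorem integral_one_sub_rpow {p : ℝ} (hp : 0 < p) :
    ∫ x in (0 : ℝ)..1, (1 - x) ^ (p - 1) = p⁻¹ := by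
  rw [intervalIntegral.integral_comp_sub_left (fun x => x ^ (p - 1)), integral_rpow (by simp [hp])]
  simp [hp.ne']

theorem lintegral_Icc_ofReal_one_sub_rpow {p : ℝ} (hp : 0 < p) :
    ∫⁻ x in Set.Icc 0 1, ENNReal.ofReal ((1 - x) ^ (p - 1)) = ENNReal.ofReal p⁻¹ := by
  have hint : IntervalIntegrable (fun x : ℝ => (1 - x) ^ (p - 1)) volume 0 1 := by
    simpa using ((intervalIntegral.intervalIntegrable_rpow' (a := 0) (b := 1) (r := p - 1)
      (by linarith)).comp_sub_left 1).symm
  rw [← ofReal_integral_eq_lintegral_ofReal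
      ((intervalIntegrable_iff_integrableOn_Icc_of_le zero_le_one).1 hint)
      ((ae_restrict_iff' measurableSet_Icc).2 (ae_of_all _ fun x hx =>
        Real.rpow_nonneg (by linarith [hx.2]) _)),
    integral_Icc_eq_integral_Ioc, ← intervalIntegral.integral_of_le zero_le_one,
    integral_one_sub_rpow hp]

theorem lintegral_one_sub_rpow_neg_betaOneLaw_le {m a : ℝ} (hm : 0 < m) (ha : a < m) :
    ∫⁻ x, ENNReal.ofReal ((1 - x) ^ (-a)) ∂betaOneLaw m ≤ ENNReal.ofReal (m / (m - a)) := by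
  rw [betaOneLaw, lintegral_withDensity_eq_lintegral_mul _ (by fun_prop) (by fun_prop)]
  calc ∫⁻ x in Set.Icc 0 1, ((fun x => ENNReal.ofReal (m * (1 - x) ^ (m - 1))) *
        fun x => ENNReal.ofReal ((1 - x) ^ (-a))) x
      ≤ ∫⁻ x in Set.Icc 0 1, ENNReal.ofReal m * ENNReal.ofReal ((1 - x) ^ (m - a - 1)) := by
        refine setLIntegral_mono (by fun_prop) fun x hx => ?_
        have ht : 0 ≤ 1 - x := by linarith [hx.2]
        rw [Pi.mul_apply, ← ENNReal.ofReal_mul (by positivity), ← ENNReal.ofReal_mul hm.le,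
          mul_assoc]
        gcongr
        exact (Real.le_rpow_add ht _ _).trans_eq (by ring_nf)
    _ = ENNReal.ofReal (m / (m - a)) := by
        rw [lintegral_const_mul _ (by fun_prop), lintegral_Icc_ofReal_one_sub_rpow (by linarith),
          ← ENNReal.ofReal_mul hm.le, div_eq_mul_inv]

theorem sq_log_one_sub_sqrt_le_rpow {x b : ℝ} (hb : 0 < b) (hx0 : 0 ≤ x) (hx1 : x ≤ 1) :
    log (1 - √x) ^ 2 ≤ (8 / b ^ 2 + 2 / b) * (1 - x) ^ (-b) := by
  have ht0 : 0 ≤ 1 - x := by linarith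
  have hsq := sq_log_le_four_mul_rpow_neg_div_sq ht0 (by linarith) hb
  have hneg := neg_log_le_rpow_neg_div ht0 hb
  calc log (1 - √x) ^ 2 ≤ 2 * log (1 - x) ^ 2 - 2 * log (1 - x) :=
        sq_log_one_sub_sqrt_le hx0 hx1
    _ ≤ 2 * (4 * (1 - x) ^ (-b) / b ^ 2) + 2 * ((1 - x) ^ (-b) / b) := by linarith
    _ = (8 / b ^ 2 + 2 / b) * (1 - x) ^ (-b) := by ring

theorem ae_mem_Icc_betaOneLaw (m : ℝ) : ∀ᵐ x ∂betaOneLaw m, x ∈ Set.Icc 0 1 :=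
  (withDensity_absolutelyContinuous _ _).ae_le (ae_restrict_mem measurableSet_Icc)

/-- there is a universal constant `C > 0` such that for every `m > 0` and every
`Beta(1, m)`-distributed random variable `X`, `E[(log(1 − √X))²] ≤ C (1/m + 1/m²)`. -/
theorem beta_log_sq_moment_bound :
    ∃ C : ℝ, 0 < C ∧
      ∀ (m : ℝ), 0 < m →
      ∀ (Ω : Type) (_ : MeasurableSpace Ω) (P : Measure Ω), IsProbabilityMeasure P →
      ∀ (X : Ω → ℝ), Measurable X → Measure.map X P = betaOneLaw m →
        ∫⁻ ω, ENNReal.ofReal ((Real.log (1 - Real.sqrt (X ω))) ^ 2) ∂P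
          ≤ ENNReal.ofReal (C * (1 / m + 1 / m ^ 2)) := by
  refine ⟨64, by norm_num, fun m hm Ω _ P _ X hX hlaw => ?_⟩
  rw [← lintegral_map (f := fun x => ENNReal.ofReal (log (1 - √x) ^ 2)) (by fun_prop) hX, hlaw]
  calc ∫⁻ x, ENNReal.ofReal (log (1 - √x) ^ 2) ∂betaOneLaw m
      ≤ ∫⁻ x, ENNReal.ofReal (8 / (m / 2) ^ 2 + 2 / (m / 2)) *
          ENNReal.ofReal ((1 - x) ^ (-(m / 2))) ∂betaOneLaw m := by
        refine lintegral_mono_ae <| (ae_mem_Icc_betaOneLaw m).mono fun x hx => ?_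
        rw [← ENNReal.ofReal_mul (by positivity)]
        exact ENNReal.ofReal_le_ofReal (sq_log_one_sub_sqrt_le_rpow (half_pos hm) hx.1 hx.2)
    _ ≤ ENNReal.ofReal (8 / (m / 2) ^ 2 + 2 / (m / 2)) * ENNReal.ofReal (m / (m - m / 2)) := by
        rw [lintegral_const_mul _ (by fun_prop)]
        gcongr
        exact lintegral_one_sub_rpow_neg_betaOneLaw_le hm (half_lt_self hm)
    _ ≤ ENNReal.ofReal (64 * (1 / m + 1 / m ^ 2)) := by
        rw [← ENNReal.ofReal_mul (by positivity)]
        refine ENNReal.ofReal_le_ofReal ?_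
        have h8 : 8 / m ≤ 64 / m := by gcongr; norm_num
        calc (8 / (m / 2) ^ 2 + 2 / (m / 2)) * (m / (m - m / 2)) = 64 / m ^ 2 + 8 / m := by
              field_simp; ring
          _ ≤ 64 * (1 / m + 1 / m ^ 2) := by rw [mul_add, mul_one_div, mul_one_div]; linarith
end

section
/- For every B ≥ 0 there exists a constant K = K(B) ≥ 0 with the following property. Let (Ω, F, P) be a probability space with a filtration (F_j)_{0≤j≤ℓ}, and let (R_j)_{0≤j≤ℓ} be an adapted, integrable real-valued process such that R_0 = 0, almost surely R_{j+1} − R_j ≤ 4π for all 0 ≤ j ≤ ℓ−1, almost surely R_{j_2} ≥ R_{j_1} − 2π for all 0 ≤ j_1 ≤ j_2 ≤ ℓ, and E[R_{j_2} − R_{j_1} | F_{j_1}] ≤ B almost surely for all 0 ≤ j_1 ≤ j_2 ≤ ℓ. Then E[R_ℓ²] ≤ K. -/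
/-!
Let `τ` be the first time the process reaches `[a, ∞)`. Since it was below `a` one step earlier,
`R τ ≤ a + 4π`, so on `{t ≤ R ℓ}` the increment `R ℓ - R τ + 2π` is at least `t - a - 2π`. That
increment is nonnegative by the drawdown bound and has conditional mean at most `B + 2π` given
`F τ`; Markov's inequality on each event `{τ = j}` and summation over `j` give
`(t - a - 2π) P(t ≤ R ℓ) ≤ (B + 2π) P(a - 2π ≤ R ℓ)`.
For `c = 8π + 2B` and the levels `k c - 4π` this halves the tail at each step, so
`P(k c ≤ R ℓ + 4π) ≤ 2⁻ᵏ`, and `E[R ℓ²] ≤ E[(R ℓ + 4π)²] ≤ ∑ ((k + 1) c)² 2⁻ᵏ = 12 c²`.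
-/

open MeasureTheory Real Function
open scoped ENNReal

lemma sum_range_succ_sq_mul_half_pow (n : ℕ) :
    ∑ k ∈ Finset.range n, ((k : ℝ) + 1) ^ 2 * (1 / 2) ^ k
      = 12 - (2 * (n : ℝ) ^ 2 + 8 * n + 12) * (1 / 2) ^ n := by
  induction n with
  | zero => norm_num
  | succ n ih =>
    rw [Finset.sum_range_succ, ih]
    push_cast
    ring

lemma sum_range_succ_sq_mul_half_pow_le (n : ℕ) :
    ∑ k ∈ Finset.range n, ((k : ℝ) + 1) ^ 2 * (1 / 2) ^ k ≤ 12 := by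
  have : 0 ≤ (2 * (n : ℝ) ^ 2 + 8 * n + 12) * (1 / 2) ^ n := by positivity
  rw [sum_range_succ_sq_mul_half_pow]
  linarith

section Tails

variable {Ω : Type*} {m : MeasurableSpace Ω} {μ : Measure Ω}

lemma measureReal_le_half_pow_of_two_mul_le [IsZeroOrProbabilityMeasure μ] {S : ℕ → Set Ω}
    (h : ∀ k, 2 * μ.real (S (k + 1)) ≤ μ.real (S k)) (k : ℕ) : μ.real (S k) ≤ (1 / 2) ^ k := by
  induction k with
  | zero => simp [measureReal_le_one]
  | succ k ih =>
    have := h k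
    rw [pow_succ]
    linarith

lemma ofReal_sq_le_tsum_indicator {c x : ℝ} (hc : 0 < c) (hx : 0 ≤ x) :
    ENNReal.ofReal (x ^ 2)
      ≤ ∑' k : ℕ, {y : ℝ | k * c ≤ y}.indicator (fun _ ↦ ENNReal.ofReal (((k + 1) * c) ^ 2)) x := by
  set k := ⌊x / c⌋₊
  have hlow : (k : ℝ) * c ≤ x := (le_div_iff₀ hc).mp (Nat.floor_le (div_nonneg hx hc.le))
  have hup : x < (k + 1) * c := (div_lt_iff₀ hc).mp (Nat.lt_floor_add_one (x / c))
  calc ENNReal.ofReal (x ^ 2) ≤ ENNReal.ofReal (((k + 1) * c) ^ 2) :=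
        ENNReal.ofReal_le_ofReal (pow_le_pow_left₀ hx hup.le 2)
    _ = {y : ℝ | k * c ≤ y}.indicator (fun _ ↦ ENNReal.ofReal (((k + 1) * c) ^ 2)) x := by
        simp [hlow]
    _ ≤ _ := ENNReal.le_tsum (f := fun k : ℕ ↦
          {y : ℝ | k * c ≤ y}.indicator (fun _ ↦ ENNReal.ofReal (((k + 1) * c) ^ 2)) x) k

lemma lintegral_ofReal_sq_le_of_two_mul_measureReal_le [IsZeroOrProbabilityMeasure μ] {X : Ω → ℝ}
    (hX : Measurable X) (hX0 : 0 ≤ᵐ[μ] X) {c : ℝ} (hc : 0 < c)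
    (htail : ∀ k : ℕ, 2 * μ.real {ω | ((k + 1 : ℕ) : ℝ) * c ≤ X ω} ≤ μ.real {ω | k * c ≤ X ω}) :
    ∫⁻ ω, ENNReal.ofReal (X ω ^ 2) ∂μ ≤ ENNReal.ofReal (12 * c ^ 2) := by
  set S : ℕ → Set Ω := fun k ↦ {ω | k * c ≤ X ω}
  have hS : ∀ k, MeasurableSet (S k) := fun k ↦ measurableSet_le measurable_const hX
  have hpt : ∀ᵐ ω ∂μ, ENNReal.ofReal (X ω ^ 2)
      ≤ ∑' k : ℕ, (S k).indicator (fun _ ↦ ENNReal.ofReal (((k + 1) * c) ^ 2)) ω := by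
    filter_upwards [hX0] with ω hω
    exact ofReal_sq_le_tsum_indicator hc hω
  calc ∫⁻ ω, ENNReal.ofReal (X ω ^ 2) ∂μ
      ≤ ∫⁻ ω, ∑' k : ℕ, (S k).indicator (fun _ ↦ ENNReal.ofReal (((k + 1) * c) ^ 2)) ω ∂μ :=
        lintegral_mono_ae hpt
    _ = ∑' k : ℕ, ENNReal.ofReal (((k + 1) * c) ^ 2) * μ (S k) := by
        rw [lintegral_tsum fun k ↦ (measurable_const.indicator (hS k)).aemeasurable]
        simp_rw [lintegral_indicator_const (hS _)]
    _ ≤ ∑' k : ℕ, ENNReal.ofReal (c ^ 2 * (((k : ℝ) + 1) ^ 2 * (1 / 2) ^ k)) := by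
        refine ENNReal.tsum_le_tsum fun k ↦ ?_
        rw [← ofReal_measureReal, ← ENNReal.ofReal_mul (by positivity)]
        refine ENNReal.ofReal_le_ofReal ?_
        have := measureReal_le_half_pow_of_two_mul_le (S := S) htail k
        calc ((k + 1) * c) ^ 2 * μ.real (S k) ≤ ((k + 1) * c) ^ 2 * (1 / 2) ^ k := by gcongr
          _ = _ := by ring
    _ ≤ ENNReal.ofReal (12 * c ^ 2) := by
        refine ENNReal.tsum_le_of_sum_range_le fun n ↦ ?_
        rw [← ENNReal.ofReal_sum_of_nonneg fun k _ ↦ by positivity, ← Finset.mul_sum]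
        exact ENNReal.ofReal_le_ofReal (by nlinarith [sum_range_succ_sq_mul_half_pow_le n])

end Tails

section ConditionalDrift

variable {Ω : Type*} {m m₀ : MeasurableSpace Ω} {μ : Measure Ω} [IsFiniteMeasure μ]
  {f : Ω → ℝ} {s : Set Ω} {B : ℝ}

lemma setIntegral_le_of_condExp_le (hm : m ≤ m₀) (hf : Integrable f μ) (hs : MeasurableSet[m] s)
    (hB : ∀ᵐ ω ∂μ, μ[f|m] ω ≤ B) : ∫ ω in s, f ω ∂μ ≤ B * μ.real s := by
  rw [← setIntegral_condExp hm hf hs]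
  calc ∫ ω in s, μ[f|m] ω ∂μ ≤ ∫ _ in s, B ∂μ :=
        setIntegral_mono_ae integrable_condExp.integrableOn (integrableOn_const (by finiteness)) hB
    _ = B * μ.real s := by rw [setIntegral_const, smul_eq_mul, mul_comm]

lemma mul_measureReal_inter_le_of_condExp_le (hm : m ≤ m₀) (hf : Integrable f μ)
    (hs : MeasurableSet[m] s) (hB : ∀ᵐ ω ∂μ, μ[f|m] ω ≤ B) {d ε : ℝ} (hε : 0 ≤ ε)
    (hd : ∀ᵐ ω ∂μ, -d ≤ f ω) {T : Set Ω} (hT : ∀ᵐ ω ∂μ, ω ∈ s ∩ T → ε ≤ f ω + d) :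
    ε * μ.real (s ∩ T) ≤ (B + d) * μ.real s := by
  have hfd : Integrable (fun ω ↦ f ω + d) μ := hf.add (integrable_const d)
  have hsT : μ.real (s ∩ T) ≤ (μ.restrict s).real {ω | ε ≤ f ω + d} := by
    refine ENNReal.toReal_mono (by finiteness) ((measure_mono_ae ?_).trans
      (Measure.le_restrict_apply s _))
    filter_upwards [hT] with ω hω hmem
    exact ⟨hω hmem, hmem.1⟩
  calc ε * μ.real (s ∩ T) ≤ ε * (μ.restrict s).real {ω | ε ≤ f ω + d} := by gcongr
    _ ≤ ∫ ω in s, f ω + d ∂μ := by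
        refine mul_meas_ge_le_integral_of_nonneg (ae_restrict_of_ae ?_) hfd.integrableOn ε
        filter_upwards [hd] with ω hω
        simp only [Pi.zero_apply]
        linarith
    _ = ∫ ω in s, f ω ∂μ + d * μ.real s := by
        rw [integral_add hf.integrableOn (integrableOn_const (by finiteness)), setIntegral_const,
          smul_eq_mul, mul_comm]
    _ ≤ (B + d) * μ.real s := by
        linarith [setIntegral_le_of_condExp_le hm hf hs hB]

end ConditionalDrift

def firstPassage {Ω : Type*} (R : ℕ → Ω → ℝ) (a : ℝ) (j : ℕ) : Set Ω :=
  {ω | a ≤ R j ω ∧ ∀ i < j, R i ω < a}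

section FirstPassage

variable {Ω : Type*} {m : MeasurableSpace Ω} {R : ℕ → Ω → ℝ} {a : ℝ}

lemma measurableSet_firstPassage {F : Filtration ℕ m} {j : ℕ}
    (hR : ∀ i ≤ j, StronglyMeasurable[F i] (R i)) :
    MeasurableSet[F j] (firstPassage R a j) := by
  have hbefore : MeasurableSet[F j] (⋂ i < j, {ω | R i ω < a}) :=
    MeasurableSet.biInter (Set.to_countable _) fun i (hi : i < j) ↦
      measurableSet_lt ((hR i hi.le).mono (F.mono hi.le)).measurable measurable_const
  have hset : firstPassage R a j = {ω | a ≤ R j ω} ∩ ⋂ i < j, {ω | R i ω < a} := by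
    ext; simp [firstPassage]
  exact hset ▸ (measurableSet_le measurable_const (hR j le_rfl).measurable).inter hbefore

lemma pairwise_disjoint_firstPassage : Pairwise (Disjoint on firstPassage R a) := by
  intro i j hij
  refine Set.disjoint_left.mpr fun ω hi hj ↦ ?_
  rcases hij.lt_or_gt with hlt | hlt
  · exact (hj.2 i hlt).not_ge hi.1
  · exact (hi.2 j hlt).not_ge hj.1

lemma exists_mem_firstPassage {n : ℕ} {ω : Ω} (h : a ≤ R n ω) :
    ∃ j ≤ n, ω ∈ firstPassage R a j := by
  classical
  have hex : ∃ j, a ≤ R j ω := ⟨n, h⟩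
  exact ⟨Nat.find hex, Nat.find_min' hex h, Nat.find_spec hex,
    fun i hi ↦ lt_of_not_ge (Nat.find_min hex hi)⟩

lemma le_add_of_mem_firstPassage {s : ℝ} {n j : ℕ} {ω : Ω} (h0 : R 0 ω ≤ a + s)
    (hstep : ∀ i, i + 1 ≤ n → R (i + 1) ω - R i ω ≤ s) (hj : j ≤ n)
    (hω : ω ∈ firstPassage R a j) : R j ω ≤ a + s := by
  cases j with
  | zero => exact h0
  | succ i => linarith [hstep i hj, hω.2 i i.lt_succ_self]

end FirstPassage

section Drift

variable {Ω : Type*} {m : MeasurableSpace Ω} {μ : Measure Ω} [IsFiniteMeasure μ]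
  {F : Filtration ℕ m} {R : ℕ → Ω → ℝ} {ℓ : ℕ}

lemma mul_measureReal_le_of_condExp_le {a s d B t : ℝ}
    (hadp : ∀ j ≤ ℓ, StronglyMeasurable[F j] (R j)) (hint : ∀ j ≤ ℓ, Integrable (R j) μ)
    (h0 : ∀ᵐ ω ∂μ, R 0 ω ≤ a + s)
    (hstep : ∀ᵐ ω ∂μ, ∀ j, j + 1 ≤ ℓ → R (j + 1) ω - R j ω ≤ s)
    (hdown : ∀ᵐ ω ∂μ, ∀ j ≤ ℓ, R j ω - d ≤ R ℓ ω)
    (hdrift : ∀ j ≤ ℓ, ∀ᵐ ω ∂μ, μ[fun ω' ↦ R ℓ ω' - R j ω'|F j] ω ≤ B)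
    (hBd : 0 ≤ B + d) (hat : a ≤ t) (hts : a + s - d ≤ t) :
    (t - a - s + d) * μ.real {ω | t ≤ R ℓ ω} ≤ (B + d) * μ.real {ω | a - d ≤ R ℓ ω} := by
  set T := {ω | t ≤ R ℓ ω}
  set E := firstPassage R a
  have hE : ∀ j ≤ ℓ, MeasurableSet[F j] (E j) := fun j hj ↦
    measurableSet_firstPassage fun i hi ↦ hadp i (hi.trans hj)
  have hcover : T ⊆ ⋃ j ∈ Finset.range (ℓ + 1), E j ∩ T := by
    intro ω hω
    obtain ⟨j, hj, hωj⟩ := exists_mem_firstPassage (hat.trans hω)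
    exact Set.mem_biUnion (Finset.mem_range_succ_iff.mpr hj) ⟨hωj, hω⟩
  have hpiece : ∀ j ≤ ℓ, (t - a - s + d) * μ.real (E j ∩ T) ≤ (B + d) * μ.real (E j) := by
    intro j hj
    refine mul_measureReal_inter_le_of_condExp_le (f := fun ω ↦ R ℓ ω - R j ω) (F.le j)
      ((hint ℓ le_rfl).sub (hint j hj)) (hE j hj) (hdrift j hj) (by linarith) ?_ ?_
    · filter_upwards [hdown] with ω hω
      linarith [hω j hj]
    · filter_upwards [h0, hstep] with ω h0ω hstepω hmem
      linarith [le_add_of_mem_firstPassage h0ω hstepω hj hmem.1, show t ≤ R ℓ ω from hmem.2]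
  have hunion : ∀ᵐ ω ∂μ, ω ∈ ⋃ j ∈ Finset.range (ℓ + 1), E j → a - d ≤ R ℓ ω := by
    filter_upwards [hdown] with ω hω hmem
    obtain ⟨j, hj, hωj⟩ := Set.mem_iUnion₂.mp hmem
    linarith [hω j (Finset.mem_range_succ_iff.mp hj), hωj.1]
  calc (t - a - s + d) * μ.real T
      ≤ (t - a - s + d) * ∑ j ∈ Finset.range (ℓ + 1), μ.real (E j ∩ T) := by
        gcongr
        · linarith
        · exact (measureReal_mono hcover (measure_ne_top _ _)).trans
            (measureReal_biUnion_finset_le _ _)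
    _ ≤ ∑ j ∈ Finset.range (ℓ + 1), (B + d) * μ.real (E j) := by
        rw [Finset.mul_sum]
        exact Finset.sum_le_sum fun j hj ↦ hpiece j (Finset.mem_range_succ_iff.mp hj)
    _ = (B + d) * μ.real (⋃ j ∈ Finset.range (ℓ + 1), E j) := by
        rw [← Finset.mul_sum, measureReal_biUnion_finset
          (pairwise_disjoint_firstPassage.set_pairwise _)
          fun j hj ↦ F.le j _ (hE j (Finset.mem_range_succ_iff.mp hj))]
    _ ≤ (B + d) * μ.real {ω | a - d ≤ R ℓ ω} :=
        mul_le_mul_of_nonneg_left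
          (ENNReal.toReal_mono (measure_ne_top _ _) (measure_mono_ae hunion)) hBd

end Drift

/-- for every `B ≥ 0` there is `K = K(B) ≥ 0` such that for any filtered
probability space, any adapted integrable process `(R_j)_{0 ≤ j ≤ ℓ}` with `R_0 = 0`,
increments a.s. bounded above by `4π`, a.s. `R_{j₂} ≥ R_{j₁} − 2π` for `j₁ ≤ j₂ ≤ ℓ`, and
`E[R_{j₂} − R_{j₁} | F_{j₁}] ≤ B` a.s. for all `j₁ ≤ j₂ ≤ ℓ`, one has `E[R_ℓ²] ≤ K`. -/
theorem bounded_conditional_drift_second_moment (B : ℝ) (hB : 0 ≤ B) :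
    ∃ K : ℝ, 0 ≤ K ∧
      ∀ (Ω : Type) (m : MeasurableSpace Ω) (P : Measure Ω), IsProbabilityMeasure P →
      ∀ (ℓ : ℕ) (F : MeasureTheory.Filtration ℕ m) (R : ℕ → Ω → ℝ),
        (∀ j, j ≤ ℓ → StronglyMeasurable[F j] (R j)) →
        (∀ j, j ≤ ℓ → Integrable (R j) P) →
        (∀ᵐ ω ∂P, R 0 ω = 0) →
        (∀ᵐ ω ∂P, ∀ j, j + 1 ≤ ℓ → R (j + 1) ω - R j ω ≤ 4 * π) →
        (∀ᵐ ω ∂P, ∀ j₁ j₂, j₁ ≤ j₂ → j₂ ≤ ℓ → R j₁ ω - 2 * π ≤ R j₂ ω) →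
        (∀ j₁ j₂, j₁ ≤ j₂ → j₂ ≤ ℓ →
          ∀ᵐ ω ∂P, (MeasureTheory.condExp (F j₁) P (fun ω' => R j₂ ω' - R j₁ ω')) ω ≤ B) →
        ∫⁻ ω, ENNReal.ofReal ((R ℓ ω) ^ 2) ∂P ≤ ENNReal.ofReal K := by
  have hπ := Real.pi_pos
  set c := 8 * π + 2 * B
  refine ⟨12 * c ^ 2, by positivity, fun Ω m P hP ℓ F R hadp hint h0 hstep hmono hdrift ↦ ?_⟩
  have hdown : ∀ᵐ ω ∂P, ∀ j ≤ ℓ, R j ω - 2 * π ≤ R ℓ ω :=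
    hmono.mono fun ω h j hj ↦ h j ℓ hj le_rfl
  have hlow : ∀ᵐ ω ∂P, -(2 * π) ≤ R ℓ ω := by
    filter_upwards [h0, hdown] with ω h0ω hω
    linarith [hω 0 (Nat.zero_le ℓ)]
  have htail : ∀ k : ℕ, 2 * P.real {ω | ((k + 1 : ℕ) : ℝ) * c ≤ R ℓ ω + 4 * π}
      ≤ P.real {ω | k * c ≤ R ℓ ω + 4 * π} := by
    intro k
    have hk : 0 ≤ (k : ℝ) * c := by positivity
    have key := mul_measureReal_le_of_condExp_le (a := k * c - 2 * π) (t := (k + 1) * c - 4 * π)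
      hadp hint (h0.mono fun ω h ↦ by linarith) hstep hdown
      (fun j hj ↦ hdrift j ℓ hj le_rfl) (by linarith) (by linarith) (by linarith)
    simp only [← sub_le_iff_le_add]
    push_cast
    rw [show (k + 1) * c - 4 * π - (k * c - 2 * π) - 4 * π + 2 * π = (B + 2 * π) * 2 by ring,
      show (k : ℝ) * c - 2 * π - 2 * π = k * c - 4 * π by ring, mul_assoc] at key
    exact le_of_mul_le_mul_left key (by linarith)
  calc ∫⁻ ω, ENNReal.ofReal ((R ℓ ω) ^ 2) ∂P
      ≤ ∫⁻ ω, ENNReal.ofReal ((R ℓ ω + 4 * π) ^ 2) ∂P := by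
        refine lintegral_mono_ae ?_
        filter_upwards [hlow] with ω hω
        exact ENNReal.ofReal_le_ofReal (sq_le_sq' (by linarith) (by linarith))
    _ ≤ ENNReal.ofReal (12 * c ^ 2) := by
        refine lintegral_ofReal_sq_le_of_two_mul_measureReal_le
          (((hadp ℓ le_rfl).mono (F.le ℓ)).measurable.add_const _)
          (hlow.mono fun ω hω ↦ by simp only [Pi.zero_apply]; linarith) (by positivity) htail
end
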